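/- arXiv:1405.1004 — 4 statements merged into one kernel-verified Lean document; each statement's English description precedes it below -/
import Mathlib

section
/- Let β ∈ ℝ^p with μ > 0, Γ a positive semidefinite p×p matrix, u ∈ ℝ^p, and J : ℝ^p → ℝ convex. If (u − Γβ)/μ ∈ ri(∂J(β)) and ker(Γ) ∩ T_β = {0}, where T_β is the orthogonal complement of the linear hull of differences of elements of ∂J(β), then β is the unique minimizer of β' ↦ J(β') + (1/(2μ))⟨Γβ', β'⟩ − (1/μ)⟨β', u⟩. -/
/-! For `η ∈ ∂J(β)` and `η₀ = (u - Γβ)/μ`, the subgradient inequality and the expansion of the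
quadratic term give `F(β + h) - F(β) ≥ ⟪η - η₀, h⟫ + ⟪Γh, h⟫/(2μ)` for the objective `F`.
If `⟪Γh, h⟫ > 0`, take `η = η₀`. Otherwise `Γh = 0` by positivity of `Γ`, so `h ∉ T_β` by
restricted injectivity: some direction `d` of the affine span of `∂J(β)` has `⟪d, h⟫ ≠ 0`, and
since `η₀` lies in the relative interior, `η = η₀ + t d ∈ ∂J(β)` for a small `t` with the sign of
`⟪d, h⟫` makes the lower bound positive. -/

open scoped RealInnerProductSpace

noncomputable def subdiff {p : ℕ} (J : EuclideanSpace ℝ (Fin p) → ℝ)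
    (β : EuclideanSpace ℝ (Fin p)) : Set (EuclideanSpace ℝ (Fin p)) :=
  {η | ∀ β', J β + ⟪η, β' - β⟫ ≤ J β'}

/-- Linear hull of a convex set: the span of all differences of its elements. -/
noncomputable def vectHull {p : ℕ} (C : Set (EuclideanSpace ℝ (Fin p))) :
    Submodule ℝ (EuclideanSpace ℝ (Fin p)) :=
  Submodule.span ℝ {d | ∃ x ∈ C, ∃ y ∈ C, d = x - y}

/-- The tangent model subspace `T_β = VectHull(∂J(β))^⊥`. -/
noncomputable def Tmod {p : ℕ} (J : EuclideanSpace ℝ (Fin p) → ℝ)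
    (β : EuclideanSpace ℝ (Fin p)) : Submodule ℝ (EuclideanSpace ℝ (Fin p)) :=
  (vectHull (subdiff J β))ᗮ

namespace LinearMap

variable {E : Type*} [NormedAddCommGroup E] [InnerProductSpace ℝ E]

theorem IsSymmetric.real_inner_map_add_self {T : E →ₗ[ℝ] E} (hT : T.IsSymmetric) (x h : E) :
    ⟪T (x + h), x + h⟫ = ⟪T x, x⟫ + 2 * ⟪T x, h⟫ + ⟪T h, h⟫ := by
  have hsymm : ⟪T h, x⟫ = ⟪T x, h⟫ := by rw [hT h x, real_inner_comm]
  rw [map_add, inner_add_left, inner_add_right, inner_add_right, hsymm]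
  ring

theorem IsPositive.apply_eq_zero_of_inner_map_self_eq_zero {T : E →ₗ[ℝ] E} (hT : T.IsPositive)
    {x : E} (hx : ⟪T x, x⟫ = 0) : T x = 0 := by
  -- Cauchy–Schwarz for the semi-inner product `⟪T ·, ·⟫`, through the discriminant of
  -- `t ↦ ⟪T (x + t • y), x + t • y⟫ ≥ 0`.
  have horth : ∀ y, ⟪T x, y⟫ = 0 := fun y ↦ by
    have hquad : ∀ t : ℝ, 0 ≤ ⟪T y, y⟫ * (t * t) + 2 * ⟪T x, y⟫ * t + 0 := fun t ↦ by
      have := hT.inner_nonneg_left (x + t • y)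
      rw [hT.isSymmetric.real_inner_map_add_self, hx] at this
      simp only [map_smul, real_inner_smul_left, real_inner_smul_right] at this
      linarith
    have := discrim_le_zero hquad
    rw [discrim] at this
    nlinarith [sq_nonneg ⟪T x, y⟫]
  exact inner_self_eq_zero.1 (horth (T x))

end LinearMap

section IntrinsicInterior

variable {E : Type*} [NormedAddCommGroup E] [InnerProductSpace ℝ E]

theorem eventually_smul_add_mem_of_mem_intrinsicInterior {C : Set E} {x d : E}
    (hx : x ∈ intrinsicInterior ℝ C) (hd : d ∈ vectorSpan ℝ C) :
    ∀ᶠ t : ℝ in nhds 0, t • d + x ∈ C := by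
  obtain ⟨z, hz, rfl⟩ := hx
  rw [← direction_affineSpan] at hd
  let line : ℝ → affineSpan ℝ C := fun t ↦
    ⟨t • d +ᵥ (z : E), AffineSubspace.vadd_mem_of_mem_direction (Submodule.smul_mem _ t hd) z.2⟩
  have hline : Continuous line := by fun_prop
  exact (hline.tendsto' 0 z (by simp [line])).eventually (mem_interior_iff_mem_nhds.1 hz)

theorem exists_inner_sub_pos_of_mem_intrinsicInterior {C : Set E} {x h : E}
    (hx : x ∈ intrinsicInterior ℝ C) (hh : h ∉ (vectorSpan ℝ C)ᗮ) :
    ∃ y ∈ C, 0 < ⟪y - x, h⟫ := by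
  obtain ⟨d, hd, hdh⟩ : ∃ d ∈ vectorSpan ℝ C, ⟪d, h⟫ ≠ 0 := by
    simpa [Submodule.mem_orthogonal] using hh
  have hscale : Filter.Tendsto (fun ε : ℝ ↦ ε * ⟪d, h⟫) (nhdsWithin 0 (Set.Ioi 0)) (nhds 0) :=
    ((continuous_mul_const _).tendsto' 0 0 (zero_mul _)).mono_left nhdsWithin_le_nhds
  obtain ⟨ε, hεC, hε : 0 < ε⟩ := ((hscale.eventually
    (eventually_smul_add_mem_of_mem_intrinsicInterior hx hd)).and self_mem_nhdsWithin).exists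
  refine ⟨(ε * ⟪d, h⟫) • d + x, hεC, ?_⟩
  rw [add_sub_cancel_right, real_inner_smul_left]
  have : 0 < ⟪d, h⟫ ^ 2 := by positivity
  nlinarith

end IntrinsicInterior

section PenalizedLeastSquares

variable {p : ℕ}

noncomputable def penalizedLeastSquares (J : EuclideanSpace ℝ (Fin p) → ℝ)
    (Γ : EuclideanSpace ℝ (Fin p) →L[ℝ] EuclideanSpace ℝ (Fin p)) (μ : ℝ)
    (u b : EuclideanSpace ℝ (Fin p)) : ℝ :=
  J b + (1 / (2 * μ)) * ⟪Γ b, b⟫ - (1 / μ) * ⟪b, u⟫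

theorem vectHull_eq_vectorSpan (C : Set (EuclideanSpace ℝ (Fin p))) :
    vectHull C = vectorSpan ℝ C := by
  rw [vectHull, vectorSpan_def]
  congr 1
  ext d
  simp [Set.mem_vsub, eq_comm]

theorem penalizedLeastSquares_add_le_of_mem_subdiff {J : EuclideanSpace ℝ (Fin p) → ℝ}
    {Γ : EuclideanSpace ℝ (Fin p) →L[ℝ] EuclideanSpace ℝ (Fin p)} (hΓ : IsSelfAdjoint Γ)
    (μ : ℝ) (u : EuclideanSpace ℝ (Fin p)) {β η : EuclideanSpace ℝ (Fin p)}
    (hη : η ∈ subdiff J β) (β' : EuclideanSpace ℝ (Fin p)) :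
    penalizedLeastSquares J Γ μ u β
        + (⟪η - μ⁻¹ • (u - Γ β), β' - β⟫ + (1 / (2 * μ)) * ⟪Γ (β' - β), β' - β⟫) ≤
      penalizedLeastSquares J Γ μ u β' := by
  obtain ⟨h, rfl⟩ : ∃ h, β' = β + h := ⟨β' - β, by abel⟩
  unfold penalizedLeastSquares
  have hsub := hη (β + h)
  have hexpand :=
    (ContinuousLinearMap.isSelfAdjoint_iff_isSymmetric.1 hΓ).real_inner_map_add_self β h
  rw [ContinuousLinearMap.coe_coe] at hexpand
  simp only [add_sub_cancel_left, inner_sub_left, inner_add_left, real_inner_smul_left,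
    real_inner_comm u h] at hsub ⊢
  rw [hexpand]
  linear_combination hsub

end PenalizedLeastSquares

theorem unique_minimizer_of_interior_certificate_general {p : ℕ}
    (J : EuclideanSpace ℝ (Fin p) → ℝ)
    (μ : ℝ) (hμ : 0 < μ)
    (Γ : EuclideanSpace ℝ (Fin p) →L[ℝ] EuclideanSpace ℝ (Fin p))
    (hΓsym : IsSelfAdjoint Γ) (hΓpsd : ∀ v, 0 ≤ ⟪Γ v, v⟫)
    (u β : EuclideanSpace ℝ (Fin p))
    (hcert : μ⁻¹ • (u - Γ β) ∈ intrinsicInterior ℝ (subdiff J β))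
    (hker : LinearMap.ker (Γ : EuclideanSpace ℝ (Fin p) →ₗ[ℝ] EuclideanSpace ℝ (Fin p)) ⊓ Tmod J β = ⊥) :
    ∀ β', β' ≠ β →
      J β + (1 / (2 * μ)) * ⟪Γ β, β⟫ - (1 / μ) * ⟪β, u⟫ <
      J β' + (1 / (2 * μ)) * ⟪Γ β', β'⟫ - (1 / μ) * ⟪β', u⟫ := by
  intro β' hβ'
  have hΓ : (Γ : EuclideanSpace ℝ (Fin p) →ₗ[ℝ] EuclideanSpace ℝ (Fin p)).IsPositive :=
    ((ContinuousLinearMap.isPositive_iff' Γ).2 ⟨hΓsym, hΓpsd⟩).toLinearMap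
  obtain ⟨η, hη, hgain⟩ : ∃ η ∈ subdiff J β,
      0 < ⟪η - μ⁻¹ • (u - Γ β), β' - β⟫ + (1 / (2 * μ)) * ⟪Γ (β' - β), β' - β⟫ := by
    rcases (hΓpsd (β' - β)).lt_or_eq with hcurved | hflat
    · refine ⟨_, intrinsicInterior_subset hcert, ?_⟩
      rw [sub_self, inner_zero_left, zero_add]
      positivity
    · have hΓh : Γ (β' - β) = 0 := hΓ.apply_eq_zero_of_inner_map_self_eq_zero hflat.symm
      have hT : β' - β ∉ (vectorSpan ℝ (subdiff J β))ᗮ := fun hmem ↦ sub_ne_zero.2 hβ' <|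
        Submodule.disjoint_def.1 (disjoint_iff.2 hker) _ hΓh (by rwa [Tmod, vectHull_eq_vectorSpan])
      obtain ⟨η, hη, hpos⟩ := exists_inner_sub_pos_of_mem_intrinsicInterior hcert hT
      exact ⟨η, hη, by rw [← hflat]; simpa using hpos⟩
  exact (lt_add_of_pos_right _ hgain).trans_le
    (penalizedLeastSquares_add_le_of_mem_subdiff hΓsym μ u hη β')

/-- Proposition 2: interior dual certificate plus restricted injectivity imply that
`β` is the unique minimizer of the regularized least-squares objective. -/
theorem unique_minimizer_of_interior_certificate {p : ℕ}
    (J : EuclideanSpace ℝ (Fin p) → ℝ) (hJ : ConvexOn ℝ Set.univ J)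
    (μ : ℝ) (hμ : 0 < μ)
    (Γ : EuclideanSpace ℝ (Fin p) →L[ℝ] EuclideanSpace ℝ (Fin p))
    (hΓsym : IsSelfAdjoint Γ) (hΓpsd : ∀ v, 0 ≤ ⟪Γ v, v⟫)
    (u β : EuclideanSpace ℝ (Fin p))
    (hcert : μ⁻¹ • (u - Γ β) ∈ intrinsicInterior ℝ (subdiff J β))
    (hker : LinearMap.ker (Γ : EuclideanSpace ℝ (Fin p) →ₗ[ℝ] EuclideanSpace ℝ (Fin p)) ⊓ Tmod J β = ⊥) :
    ∀ β', β' ≠ β →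
      J β + (1 / (2 * μ)) * ⟪Γ β, β⟫ - (1 / μ) * ⟪β, u⟫ <
      J β' + (1 / (2 * μ)) * ⟪Γ β', β'⟫ - (1 / μ) * ⟪β', u⟫ :=
  unique_minimizer_of_interior_certificate_general J μ hμ Γ hΓsym hΓpsd u β hcert hker
end

section
/- Let Γ_k → Γ̃ be a sequence of positive semidefinite p×p matrices, ε_k ∈ ℝ^p with ε_k/μ_k → 0, μ_k → 0 with μ_k > 0, and u_k = Γ_k β₀ + ε_k. Let J : ℝ^p → ℝ be convex, K a compact convex neighborhood of β₀, M ⊆ ℝ^p a set containing β₀, and suppose β₀ is the unique minimizer over ℝ^p of J(β) subject to Γ̃β = Γ̃β₀. If β_k minimizes β ↦ J(β) + (1/(2μ_k))⟨Γ_k β, β⟩ − (1/μ_k)⟨β, u_k⟩ over M ∩ K, then β_k → β₀. -/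
/-!
Testing the minimality of `β_k` against `β₀` and using `u_k = Γ_k β₀ + ε_k` gives the basic
inequality `J(β_k) + ⟪Γ_k (β_k - β₀), β_k - β₀⟫ / (2μ_k) ≤ J(β₀) + ⟪β_k - β₀, ε_k / μ_k⟫`.
The `β_k` lie in the compact set `K`, so it suffices that every cluster point `β*` equals `β₀`.
Along a filter on which `β_k → β*`, the basic inequality gives `J(β*) ≤ J(β₀)` after dropping the
nonnegative quadratic term, and `⟪Γ̃ (β* - β₀), β* - β₀⟫ = 0` after multiplying by `2μ_k → 0`.
As a limit of positive operators `Γ̃` is positive, so `Γ̃ β* = Γ̃ β₀`, and uniqueness of the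
constrained minimizer forces `β* = β₀`.
-/

open scoped RealInnerProductSpace
open Filter Topology

namespace ContinuousLinearMap

variable {𝕜 E : Type*} [RCLike 𝕜] [NormedAddCommGroup E] [InnerProductSpace 𝕜 E]

open scoped InnerProductSpace
open RCLike

theorem isClosed_setOf_isPositive : IsClosed {T : E →L[𝕜] E | T.IsPositive} := by
  have hleft : ∀ x y : E, Continuous fun T : E →L[𝕜] E => ⟪T x, y⟫_𝕜 := fun x y =>
    (continuous_id.clm_apply continuous_const).inner continuous_const
  have hright : ∀ x y : E, Continuous fun T : E →L[𝕜] E => ⟪x, T y⟫_𝕜 := fun x y =>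
    continuous_const.inner (continuous_id.clm_apply continuous_const)
  have hset : {T : E →L[𝕜] E | T.IsPositive} =
      (⋂ x, ⋂ y, {T | ⟪T x, y⟫_𝕜 = ⟪x, T y⟫_𝕜}) ∩ ⋂ x, {T | 0 ≤ re ⟪T x, x⟫_𝕜} := by
    ext T
    simp [isPositive_def, reApplyInnerSelf, LinearMap.IsSymmetric]
  rw [hset]
  exact (isClosed_iInter fun x => isClosed_iInter fun y =>
      isClosed_eq (hleft x y) (hright x y)).inter
    (isClosed_iInter fun x => isClosed_le continuous_const (continuous_re.comp (hleft x x)))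

theorem IsPositive.inner_apply_self_eq_zero_iff {T : E →L[𝕜] E} (hT : T.IsPositive) (x : E) :
    ⟪T x, x⟫_𝕜 = 0 ↔ T x = 0 := by
  refine ⟨fun h => ?_, fun h => by simp [h]⟩
  -- positivity along the line `x + t • T x` is a quadratic in `t` with discriminant `4 ‖T x‖⁴`
  have hquad : ∀ t : ℝ, 0 ≤ re ⟪T (T x), T x⟫_𝕜 * (t * t) + 2 * ‖T x‖ ^ 2 * t + 0 := by
    intro t
    have hline := hT.re_inner_nonneg_left (x + (t : 𝕜) • T x)
    simp only [map_add, map_smul, inner_add_right, inner_add_left, h, inner_smul_left,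
      conj_ofReal, hT.inner_left_eq_inner_right (T x) x, inner_self_eq_norm_sq_to_K, zero_add,
      inner_smul_right, mul_re, ofReal_re, re_ofReal_pow, ofReal_im, im_ofReal_pow, mul_zero,
      sub_zero, zero_mul, mul_im, add_zero] at hline
    linear_combination hline
  simpa [discrim] using discrim_le_zero hquad

end ContinuousLinearMap

open ContinuousLinearMap

theorem penalized_basic_inequality {E : Type*} [NormedAddCommGroup E] [InnerProductSpace ℝ E]
    {J : E → ℝ} {T : E →L[ℝ] E} (hT : T.IsSymmetric) {μ : ℝ} (hμ : 0 < μ) {b β₀ e : E}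
    (hmin : J b + (1 / (2 * μ)) * ⟪T b, b⟫ - (1 / μ) * ⟪b, T β₀ + e⟫ ≤
      J β₀ + (1 / (2 * μ)) * ⟪T β₀, β₀⟫ - (1 / μ) * ⟪β₀, T β₀ + e⟫) :
    J b + (1 / (2 * μ)) * ⟪T (b - β₀), b - β₀⟫ ≤ J β₀ + ⟪b - β₀, μ⁻¹ • e⟫ := by
  have hquad : ⟪T (b - β₀), b - β₀⟫ = ⟪T b, b⟫ - 2 * ⟪b, T β₀⟫ + ⟪T β₀, β₀⟫ := by
    have hsymm : ⟪T b, β₀⟫ = ⟪b, T β₀⟫ := hT b β₀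
    rw [map_sub, inner_sub_left, inner_sub_right, inner_sub_right, hsymm,
      real_inner_comm (T β₀) b]
    ring
  rw [hquad, real_inner_smul_right, inner_sub_left]
  rw [inner_add_right, inner_add_right] at hmin
  have hμ' : μ ≠ 0 := hμ.ne'
  field_simp at hmin ⊢
  linarith [real_inner_comm β₀ (T β₀)]

theorem le_and_eq_zero_of_penalized_le {ι : Type*} {l : Filter ι} [l.NeBot]
    {j q r μ : ι → ℝ} {j₀ js Q : ℝ} (hj : Tendsto j l (𝓝 js)) (hq : Tendsto q l (𝓝 Q))
    (hr : Tendsto r l (𝓝 0)) (hμ : Tendsto μ l (𝓝 0)) (hμpos : ∀ k, 0 < μ k)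
    (hq_nonneg : ∀ k, 0 ≤ q k) (h : ∀ k, j k + (1 / (2 * μ k)) * q k ≤ j₀ + r k) :
    js ≤ j₀ ∧ Q = 0 := by
  have hj_le : ∀ k, j k ≤ j₀ + r k := fun k =>
    (le_add_of_nonneg_right (mul_nonneg (by have := hμpos k; positivity) (hq_nonneg k))).trans
      (h k)
  have hq_le : ∀ k, q k ≤ 2 * μ k * (j₀ - j k + r k) := fun k => by
    have hμk := hμpos k
    calc q k = 2 * μ k * ((1 / (2 * μ k)) * q k) := by field_simp
      _ ≤ 2 * μ k * (j₀ - j k + r k) := by gcongr; linarith [h k]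
  refine ⟨by simpa using le_of_tendsto_of_tendsto' hj (tendsto_const_nhds.add hr) hj_le, ?_⟩
  refine le_antisymm ?_ (ge_of_tendsto' hq hq_nonneg)
  simpa using le_of_tendsto_of_tendsto' hq
    ((tendsto_const_nhds.mul hμ).mul ((tendsto_const_nhds.sub hj).add hr)) hq_le

theorem le_and_apply_eq_of_penalized_le {ι E : Type*} [NormedAddCommGroup E]
    [InnerProductSpace ℝ E] {l : Filter ι} [l.NeBot] {J : E → ℝ} {Γ : ι → E →L[ℝ] E}
    {Γt : E →L[ℝ] E} {ε b : ι → E} {μ : ι → ℝ} {β₀ βs : E} (hJ : ContinuousAt J βs)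
    (hΓ : Tendsto Γ l (𝓝 Γt)) (hΓpos : ∀ k, (Γ k).IsPositive) (hμ : Tendsto μ l (𝓝 0))
    (hμpos : ∀ k, 0 < μ k) (hεμ : Tendsto (fun k => (μ k)⁻¹ • ε k) l (𝓝 0))
    (hb : Tendsto b l (𝓝 βs))
    (hbasic : ∀ k, J (b k) + (1 / (2 * μ k)) * ⟪Γ k (b k - β₀), b k - β₀⟫ ≤
      J β₀ + ⟪b k - β₀, (μ k)⁻¹ • ε k⟫) :
    J βs ≤ J β₀ ∧ Γt βs = Γt β₀ := by
  have hd : Tendsto (fun k => b k - β₀) l (𝓝 (βs - β₀)) := hb.sub_const β₀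
  have hΓd : Tendsto (fun k => Γ k (b k - β₀)) l (𝓝 (Γt (βs - β₀))) :=
    isBoundedBilinearMap_apply.continuous.continuousAt.tendsto.comp (hΓ.prodMk_nhds hd)
  obtain ⟨hJle, hQ⟩ := le_and_eq_zero_of_penalized_le (hJ.tendsto.comp hb) (hΓd.inner hd)
    (by simpa using hd.inner hεμ) hμ hμpos (fun k => (hΓpos k).inner_nonneg_left _) hbasic
  have hΓt : Γt.IsPositive := isClosed_setOf_isPositive.mem_of_tendsto hΓ (.of_forall hΓpos)
  rw [hΓt.inner_apply_self_eq_zero_iff, map_sub, sub_eq_zero] at hQ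
  exact ⟨hJle, hQ⟩

theorem constrained_minimizers_converge_general {p : ℕ}
    (J : EuclideanSpace ℝ (Fin p) → ℝ) (hJ : ConvexOn ℝ Set.univ J)
    (Γ : ℕ → EuclideanSpace ℝ (Fin p) →L[ℝ] EuclideanSpace ℝ (Fin p))
    (Γt : EuclideanSpace ℝ (Fin p) →L[ℝ] EuclideanSpace ℝ (Fin p))
    (hΓpsd : ∀ k v, 0 ≤ ⟪Γ k v, v⟫) (hΓsym : ∀ k, IsSelfAdjoint (Γ k))
    (hΓ : Tendsto Γ atTop (𝓝 Γt))
    (ε : ℕ → EuclideanSpace ℝ (Fin p)) (μ : ℕ → ℝ) (hμpos : ∀ k, 0 < μ k)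
    (hεμ : Tendsto (fun k => (μ k)⁻¹ • ε k) atTop (𝓝 0))
    (hμ : Tendsto μ atTop (𝓝 0))
    (β₀ : EuclideanSpace ℝ (Fin p))
    (u : ℕ → EuclideanSpace ℝ (Fin p)) (hu : ∀ k, u k = Γ k β₀ + ε k)
    (K : Set (EuclideanSpace ℝ (Fin p))) (hKcpt : IsCompact K)
    (hKnbd : K ∈ 𝓝 β₀)
    (M : Set (EuclideanSpace ℝ (Fin p))) (hβ₀M : β₀ ∈ M)
    (huniq : ∀ β, Γt β = Γt β₀ → β ≠ β₀ → J β₀ < J β)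
    (β : ℕ → EuclideanSpace ℝ (Fin p))
    (hβmem : ∀ k, β k ∈ M ∩ K)
    (hβmin : ∀ k, ∀ β' ∈ M ∩ K,
      J (β k) + (1 / (2 * μ k)) * ⟪Γ k (β k), β k⟫ - (1 / μ k) * ⟪β k, u k⟫ ≤
      J β' + (1 / (2 * μ k)) * ⟪Γ k β', β'⟫ - (1 / μ k) * ⟪β', u k⟫) :
    Tendsto β atTop (𝓝 β₀) := by
  have hJcont : Continuous J := hJ.locallyLipschitz.continuous
  have hΓpos : ∀ k, (Γ k).IsPositive := fun k => (isPositive_iff' _).2 ⟨hΓsym k, hΓpsd k⟩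
  have hbasic : ∀ k, J (β k) + (1 / (2 * μ k)) * ⟪Γ k (β k - β₀), β k - β₀⟫ ≤
      J β₀ + ⟪β k - β₀, (μ k)⁻¹ • ε k⟫ := fun k =>
    penalized_basic_inequality (hΓpos k).isSymmetric (hμpos k)
      (hu k ▸ hβmin k β₀ ⟨hβ₀M, mem_of_mem_nhds hKnbd⟩)
  refine hKcpt.tendsto_nhds_of_unique_mapClusterPt (.of_forall fun k => (hβmem k).2) ?_
  intro βs _ hβs
  obtain ⟨U, hU, hβU⟩ := mapClusterPt_iff_ultrafilter.1 hβs
  obtain ⟨hJle, hΓeq⟩ := le_and_apply_eq_of_penalized_le hJcont.continuousAt (hΓ.mono_left hU)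
    hΓpos (hμ.mono_left hU) hμpos (hεμ.mono_left hU) hβU hbasic
  by_contra hne
  exact (huniq βs hΓeq hne).not_ge hJle

/-- Lemma 1: convergence of the minimizers of the constrained penalized problems
to `β₀` under the canonical parameter scaling. -/
theorem constrained_minimizers_converge {p : ℕ}
    (J : EuclideanSpace ℝ (Fin p) → ℝ) (hJ : ConvexOn ℝ Set.univ J)
    (Γ : ℕ → EuclideanSpace ℝ (Fin p) →L[ℝ] EuclideanSpace ℝ (Fin p))
    (Γt : EuclideanSpace ℝ (Fin p) →L[ℝ] EuclideanSpace ℝ (Fin p))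
    (hΓpsd : ∀ k v, 0 ≤ ⟪Γ k v, v⟫) (hΓsym : ∀ k, IsSelfAdjoint (Γ k))
    (hΓ : Tendsto Γ atTop (𝓝 Γt))
    (ε : ℕ → EuclideanSpace ℝ (Fin p)) (μ : ℕ → ℝ) (hμpos : ∀ k, 0 < μ k)
    (hεμ : Tendsto (fun k => (μ k)⁻¹ • ε k) atTop (𝓝 0))
    (hμ : Tendsto μ atTop (𝓝 0))
    (β₀ : EuclideanSpace ℝ (Fin p))
    (u : ℕ → EuclideanSpace ℝ (Fin p)) (hu : ∀ k, u k = Γ k β₀ + ε k)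
    (K : Set (EuclideanSpace ℝ (Fin p))) (hKcpt : IsCompact K) (hKcvx : Convex ℝ K)
    (hKnbd : K ∈ 𝓝 β₀)
    (M : Set (EuclideanSpace ℝ (Fin p))) (hβ₀M : β₀ ∈ M)
    (huniq : ∀ β, Γt β = Γt β₀ → β ≠ β₀ → J β₀ < J β)
    (β : ℕ → EuclideanSpace ℝ (Fin p))
    (hβmem : ∀ k, β k ∈ M ∩ K)
    (hβmin : ∀ k, ∀ β' ∈ M ∩ K,
      J (β k) + (1 / (2 * μ k)) * ⟪Γ k (β k), β k⟫ - (1 / μ k) * ⟪β k, u k⟫ ≤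
      J β' + (1 / (2 * μ k)) * ⟪Γ k β', β'⟫ - (1 / μ k) * ⟪β', u k⟫) :
    Tendsto β atTop (𝓝 β₀) :=
  constrained_minimizers_converge_general J hJ Γ Γt hΓpsd hΓsym hΓ ε μ hμpos hεμ hμ β₀ u hu K hKcpt
    hKnbd M hβ₀M huniq β hβmem hβmin
end

section
/- Let J : ℝ^p → ℝ be convex, continuous, and suppose β_k → β₀, η_k → η with η_k ∈ rbound(∂J(β_k)), z_k ∈ ℝ^p with ‖z_k‖ = 1 and ⟨z_k, v − η_k⟩ ≥ 0 for all v ∈ ∂J(β_k), and z_k → z*. If moreover ∂J is inner semicontinuous at β₀ along the sequence (β_k) (i.e., for every v ∈ ∂J(β₀) there exist v_k ∈ ∂J(β_k) with v_k → v), then ⟨z*, v − η⟩ ≥ 0 for all v ∈ ∂J(β₀), with z* ≠ 0. -/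
open scoped RealInnerProductSpace
open Filter Topology

/-- Passing supporting normals of relative boundary points to the limit, using inner
semicontinuity of the subdifferential, yields a nontrivial supporting normal at the limit. -/
theorem limit_of_supporting_normals {p : ℕ}
    (J : EuclideanSpace ℝ (Fin p) → ℝ) (hJ : ConvexOn ℝ Set.univ J) (hJc : Continuous J)
    (βk ηk zk : ℕ → EuclideanSpace ℝ (Fin p))
    (β₀ η zstar : EuclideanSpace ℝ (Fin p))
    (hβ : Tendsto βk atTop (𝓝 β₀)) (hη : Tendsto ηk atTop (𝓝 η))
    (hrb : ∀ k, ηk k ∈ subdiff J (βk k) \ intrinsicInterior ℝ (subdiff J (βk k)))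
    (hznorm : ∀ k, ‖zk k‖ = 1)
    (hsupp : ∀ k, ∀ v ∈ subdiff J (βk k), 0 ≤ ⟪zk k, v - ηk k⟫)
    (hz : Tendsto zk atTop (𝓝 zstar))
    (hisc : ∀ v ∈ subdiff J β₀, ∃ vk : ℕ → EuclideanSpace ℝ (Fin p),
      (∀ k, vk k ∈ subdiff J (βk k)) ∧ Tendsto vk atTop (𝓝 v)) :
    (∀ v ∈ subdiff J β₀, 0 ≤ ⟪zstar, v - η⟫) ∧ zstar ≠ 0 := by
  constructor
  · intro v hv
    obtain ⟨vk, hvk, hvklim⟩ := hisc v hv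
    have hlim : Tendsto (fun k => ⟪zk k, vk k - ηk k⟫) atTop (𝓝 ⟪zstar, v - η⟫) :=
      Tendsto.inner hz (hvklim.sub hη)
    exact le_of_tendsto_of_tendsto' tendsto_const_nhds hlim
      (fun k => hsupp k (vk k) (hvk k))
  · intro h
    have : Tendsto (fun k => ‖zk k‖) atTop (𝓝 ‖zstar‖) := hz.norm
    have h1 : Tendsto (fun _ : ℕ => (1:ℝ)) atTop (𝓝 ‖zstar‖) := by
      simpa [hznorm] using this
    have := tendsto_nhds_unique h1 tendsto_const_nhds
    rw [h, norm_zero] at this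
    norm_num at this
end

section
/- Let Γ̃ be a p×p positive semidefinite matrix, T a subspace with ker(Γ̃) ∩ T = {0}, and Γ_k → Γ̃, P_{T_k} → P_T. Then Γ_{k,T_k}⁺ → Γ̃_T⁺ (convergence of Moore–Penrose pseudo-inverses), and ‖Γ_{k,T_k}⁺ − Γ̃_T⁺‖ = O(max(‖Γ_k − Γ̃‖, ‖P_{T_k} − P_T‖)). -/
open Filter Topology

/-- The four Penrose conditions characterizing the Moore–Penrose pseudo-inverse. -/
def IsMoorePenroseInverse {p : ℕ}
    (A B : EuclideanSpace ℝ (Fin p) →L[ℝ] EuclideanSpace ℝ (Fin p)) : Prop :=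
  A ∘L B ∘L A = A ∧ B ∘L A ∘L B = B ∧
    IsSelfAdjoint (A ∘L B) ∧ IsSelfAdjoint (B ∘L A)

/-- Orthogonal projection onto a submodule, as an endomorphism. -/
noncomputable def projCLM {p : ℕ} (T : Submodule ℝ (EuclideanSpace ℝ (Fin p))) :
    EuclideanSpace ℝ (Fin p) →L[ℝ] EuclideanSpace ℝ (Fin p) :=
  T.subtypeL.comp (T.orthogonalProjectionOnto)

/-!
Write `P = P_T`, `A = P Γ̃ P`, `B = Γ̃_T⁺`, and likewise `P_k`, `A_k`, `B_k`. A positive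
semidefinite operator that is injective on `T` is coercive there, `⟪Γ̃ x, x⟫ ≥ c ‖x‖²` on `T`, so
`A` is invertible as an operator on `T`: `A S = S A = P` for some `S`. The Penrose equations then
force `A B = B A = P`, and coercivity gives `‖B‖ ≤ 1/c`. Coercivity survives small perturbations
of the operator and of the subspace, so for large `k` the same holds for `A_k`, `B_k` with
constant `c/4`, and the identity
`B_k - B = B_k (A - A_k) B + (P_k - P) B + B_k (P_k - P) (1 - P)`
bounds `‖B_k - B‖` linearly by `‖A_k - A‖ + ‖P_k - P‖ = O(max ‖Γ_k - Γ̃‖ ‖P_k - P‖)`.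
-/

open ContinuousLinearMap
open scoped RealInnerProductSpace

section StarRing

variable {R : Type*} [Ring R] [StarRing R]

def IsPenroseInverse (A B : R) : Prop :=
  A * B * A = A ∧ B * A * B = B ∧ IsSelfAdjoint (A * B) ∧ IsSelfAdjoint (B * A)

theorem IsPenroseInverse.mul_eq {A B P S : R} (hB : IsPenroseInverse A B) (hP : IsSelfAdjoint P)
    (hPA : P * A = A) (hAP : A * P = A) (hAS : A * S = P) (hSA : S * A = P) :
    A * B = P ∧ B * A = P ∧ P * B = B ∧ B * P = B := by
  obtain ⟨h₁, h₂, h₃, h₄⟩ := hB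
  have hAB : A * B = P := by
    have hleft : P * (A * B) = A * B := by rw [← mul_assoc, hPA]
    have hright : A * B * P = P := by rw [← hAS, ← mul_assoc, h₁]
    calc A * B = P * (A * B) := hleft.symm
      _ = star (A * B * P) := by rw [star_mul, hP.star_eq, h₃.star_eq]
      _ = P := by rw [hright, hP.star_eq]
  have hBA : B * A = P := by
    have hright : B * A * P = B * A := by rw [mul_assoc, hAP]
    have hleft : P * (B * A) = P := by rw [← hSA, mul_assoc, ← mul_assoc A, h₁]
    calc B * A = B * A * P := hright.symm
      _ = star (P * (B * A)) := by rw [star_mul, hP.star_eq, h₄.star_eq]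
      _ = P := by rw [hleft, hP.star_eq]
  refine ⟨hAB, hBA, ?_, ?_⟩
  · rw [← hBA, h₂]
  · rw [← hAB, ← mul_assoc, h₂]

end StarRing

section NormedRing

variable {R : Type*} [NormedRing R]

theorem norm_mul_mul_sub_mul_mul_le {P P' f g : R} (hP : ‖P‖ ≤ 1) (hP' : ‖P'‖ ≤ 1) :
    ‖P' * g * P' - P * f * P‖ ≤ (1 + 2 * ‖f‖) * max ‖g - f‖ ‖P' - P‖ := by
  have hsplit : P' * g * P' - P * f * P
      = P' * (g - f) * P' + (P' - P) * f * P' + P * f * (P' - P) := by noncomm_ring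
  have h₁ : ‖P' * (g - f) * P'‖ ≤ ‖g - f‖ :=
    calc ‖P' * (g - f) * P'‖ ≤ ‖P'‖ * ‖g - f‖ * ‖P'‖ := norm_mul₃_le
      _ ≤ 1 * ‖g - f‖ * 1 := by gcongr
      _ = ‖g - f‖ := by ring
  have h₂ : ‖(P' - P) * f * P'‖ ≤ ‖f‖ * ‖P' - P‖ :=
    calc ‖(P' - P) * f * P'‖ ≤ ‖P' - P‖ * ‖f‖ * ‖P'‖ := norm_mul₃_le
      _ ≤ ‖P' - P‖ * ‖f‖ * 1 := by gcongr
      _ = ‖f‖ * ‖P' - P‖ := by ring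
  have h₃ : ‖P * f * (P' - P)‖ ≤ ‖f‖ * ‖P' - P‖ :=
    calc ‖P * f * (P' - P)‖ ≤ ‖P‖ * ‖f‖ * ‖P' - P‖ := norm_mul₃_le
      _ ≤ 1 * ‖f‖ * ‖P' - P‖ := by gcongr
      _ = ‖f‖ * ‖P' - P‖ := by ring
  have hg : ‖g - f‖ ≤ max ‖g - f‖ ‖P' - P‖ := le_max_left _ _
  have hp : ‖P' - P‖ ≤ max ‖g - f‖ ‖P' - P‖ := le_max_right _ _
  rw [hsplit]
  refine norm_add₃_le.trans ?_
  nlinarith [norm_nonneg f]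

theorem norm_sub_le_of_mul_eq {A A' B B' P P' : R} (hAB : A * B = P) (hBA' : B' * A' = P')
    (hPB : P * B = B) (hBP' : B' * P' = B') (hP : IsIdempotentElem P) (hP₁ : ‖1 - P‖ ≤ 1) :
    ‖B' - B‖ ≤ ‖B'‖ * ‖A - A'‖ * ‖B‖ + ‖P' - P‖ * ‖B‖ + ‖B'‖ * ‖P' - P‖ := by
  have e₁ : B' * (A - A') * B = B' * P - P' * B := by
    rw [mul_sub, sub_mul, mul_assoc, hAB, hBA']
  have e₂ : (P' - P) * B = P' * B - B := by rw [sub_mul, hPB]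
  have e₃ : B' * (P' - P) * (1 - P) = B' - B' * P := by
    rw [mul_assoc, mul_sub (P' - P), mul_one, sub_mul, hP.eq, sub_sub_sub_cancel_right,
      mul_sub, ← mul_assoc, hBP']
  have hsplit : B' - B = B' * (A - A') * B + (P' - P) * B + B' * (P' - P) * (1 - P) := by
    rw [e₁, e₂, e₃]; abel
  have h₃ : ‖B' * (P' - P) * (1 - P)‖ ≤ ‖B'‖ * ‖P' - P‖ :=
    calc ‖B' * (P' - P) * (1 - P)‖ ≤ ‖B'‖ * ‖P' - P‖ * ‖1 - P‖ := norm_mul₃_le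
      _ ≤ ‖B'‖ * ‖P' - P‖ * 1 := by gcongr
      _ = ‖B'‖ * ‖P' - P‖ := mul_one _
  rw [hsplit]
  exact norm_add₃_le.trans (add_le_add_three norm_mul₃_le (norm_mul_le _ _) h₃)

end NormedRing

section InnerProduct

variable {E : Type*} [NormedAddCommGroup E] [InnerProductSpace ℝ E]

def CoerciveOn (f : E →L[ℝ] E) (K : Submodule ℝ E) (c : ℝ) : Prop :=
  ∀ x ∈ K, c * ‖x‖ ^ 2 ≤ ⟪f x, x⟫

-- The paper's `Γ_T = P_T Γ P_T`.
noncomputable def compression (K : Submodule ℝ E) [K.HasOrthogonalProjection] (f : E →L[ℝ] E) :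
    E →L[ℝ] E :=
  K.starProjection * f * K.starProjection

theorem ContinuousLinearMap.IsPositive.apply_eq_zero_of_inner_self_eq_zero {f : E →L[ℝ] E}
    (hf : f.IsPositive) {x : E} (hx : ⟪f x, x⟫ = 0) : f x = 0 := by
  -- The quadratic `t ↦ ⟪f (x + t • f x), x + t • f x⟫ ≥ 0` has no constant term, so its
  -- linear coefficient `2 ‖f x‖²` must vanish.
  have hq : ∀ t : ℝ, 0 ≤ ⟪f (f x), f x⟫ * (t * t) + 2 * ‖f x‖ ^ 2 * t + 0 := by
    intro t
    have h := hf.inner_nonneg_left (x + t • f x)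
    have hsymm : ⟪f (f x), x⟫ = ‖f x‖ ^ 2 := by
      rw [hf.inner_left_eq_inner_right, real_inner_self_eq_norm_sq]
    simp only [map_add, map_smul, inner_add_left, inner_add_right, real_inner_smul_left,
      real_inner_smul_right, hx, hsymm, real_inner_self_eq_norm_sq] at h
    linarith
  have h : (2 * ‖f x‖ ^ 2) ^ 2 = 0 :=
    le_antisymm (by simpa [discrim] using discrim_le_zero hq) (sq_nonneg _)
  simpa using h

theorem ContinuousLinearMap.IsPositive.exists_coerciveOn {f : E →L[ℝ] E} (hf : f.IsPositive)
    {K : Submodule ℝ E} [FiniteDimensional ℝ K] (hK : LinearMap.ker (f : E →ₗ[ℝ] E) ⊓ K = ⊥) :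
    ∃ c > 0, CoerciveOn f K c := by
  have hpos : ∀ x ∈ Metric.sphere (0 : K) 1, 0 < ⟪f x, x⟫ := by
    intro x hx₁
    refine (hf.inner_nonneg_left x).lt_of_ne fun h => ?_
    have hx : (x : E) ∈ LinearMap.ker (f : E →ₗ[ℝ] E) ⊓ K :=
      ⟨hf.apply_eq_zero_of_inner_self_eq_zero h.symm, x.2⟩
    rw [hK, Submodule.mem_bot, ZeroMemClass.coe_eq_zero] at hx
    simp [hx] at hx₁
  obtain ⟨c, hc, hcs⟩ := (isCompact_sphere (0 : K) 1).exists_forall_le' (by fun_prop) hpos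
  refine ⟨c, hc, fun x hx => ?_⟩
  rcases eq_or_ne x 0 with rfl | hx₀
  · simp
  have hu := hcs (‖x‖⁻¹ • ⟨x, hx⟩) (by simp [norm_smul, hx₀])
  rw [Submodule.coe_smul, map_smul, real_inner_smul_left, real_inner_smul_right, ← mul_assoc,
    ← sq, inv_pow, inv_mul_eq_div, le_div_iff₀ (by positivity)] at hu
  exact hu

variable (K : Submodule ℝ E) [K.HasOrthogonalProjection]

theorem inner_compression_apply (f : E →L[ℝ] E) (x : E) :
    ⟪compression K f x, x⟫ = ⟪f (K.starProjection x), K.starProjection x⟫ :=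
  Submodule.inner_starProjection_left_eq_right K _ _

variable {K}

theorem CoerciveOn.of_norm_compression_sub_le {K' : Submodule ℝ E} [K'.HasOrthogonalProjection]
    {f g : E →L[ℝ] E} {c : ℝ} (hc : 0 ≤ c) (hf : CoerciveOn f K c)
    (hfg : ‖compression K' g - compression K f‖ ≤ c / 4)
    (hKK' : ‖K'.starProjection - K.starProjection‖ ≤ 1 / 4) : CoerciveOn g K' (c / 4) := by
  intro x hx
  have hx' : K'.starProjection x = x := Submodule.starProjection_eq_self_iff.mpr hx
  have hPx : 3 / 4 * ‖x‖ ≤ ‖K.starProjection x‖ := by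
    have h := (K'.starProjection - K.starProjection).le_opNorm x
    rw [sub_apply, hx'] at h
    nlinarith [norm_sub_norm_le x (K.starProjection x), norm_nonneg x]
  have hcompr : c * ‖K.starProjection x‖ ^ 2 ≤ ⟪compression K f x, x⟫ := by
    rw [inner_compression_apply]
    exact hf _ (K.starProjection_apply_mem x)
  have hdiff : -(c / 4 * ‖x‖ ^ 2) ≤ ⟪(compression K' g - compression K f) x, x⟫ := by
    have h := (abs_real_inner_le_norm _ x).trans
      (mul_le_mul_of_nonneg_right ((compression K' g - compression K f).le_opNorm x)
        (norm_nonneg x))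
    rw [abs_le] at h
    nlinarith [norm_nonneg x]
  have hg : ⟪g x, x⟫ = ⟪compression K f x, x⟫ + ⟪(compression K' g - compression K f) x, x⟫ := by
    rw [sub_apply, inner_sub_left, inner_compression_apply K' g, hx']
    ring
  have hsq : c * (3 / 4 * ‖x‖) ^ 2 ≤ c * ‖K.starProjection x‖ ^ 2 := by gcongr
  rw [hg]
  nlinarith [norm_nonneg x]

theorem CoerciveOn.exists_compression_mul_eq [CompleteSpace K] {f : E →L[ℝ] E} {c : ℝ}
    (hc : 0 < c) (hf : CoerciveOn f K c) :
    ∃ S, compression K f * S = K.starProjection ∧ S * compression K f = K.starProjection := by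
  -- `S` inverts the compression on `K`, where it is coercive, hence invertible (Lax–Milgram).
  set g : K →L[ℝ] K := K.orthogonalProjectionOnto ∘L f ∘L K.subtypeL
  have hg : IsUnit g := by
    refine isUnit_of_forall_le_norm_inner_map g (c := ⟨c, hc.le⟩) hc fun x => ?_
    have h : ⟪g x, x⟫ = ⟪f x, x⟫ := K.inner_orthogonalProjectionOnto_eq_of_mem_right x (f x)
    rw [h, mul_comm, Real.norm_eq_abs]
    exact (hf x x.2).trans (le_abs_self _)
  obtain ⟨u, hu⟩ := hg
  have hgu : ∀ y, g ((↑u⁻¹ : K →L[ℝ] K) y) = y := fun y => by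
    rw [← hu, ← mul_apply_eq_comp, u.mul_inv, one_apply_eq_self]
  have hug : ∀ y, (↑u⁻¹ : K →L[ℝ] K) (g y) = y := fun y => by
    rw [← hu, ← mul_apply_eq_comp, u.inv_mul, one_apply_eq_self]
  have hπ : ∀ y : K, K.orthogonalProjectionOnto y = y :=
    K.orthogonalProjectionOnto_mem_subspace_eq_self
  refine ⟨K.subtypeL ∘L ↑u⁻¹ ∘L K.orthogonalProjectionOnto, ?_, ?_⟩ <;> ext x <;>
    simp only [compression, mul_apply_eq_comp, Submodule.starProjection_apply, comp_apply,
      Submodule.subtypeL_apply, hπ]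
  · exact congrArg Subtype.val (hgu _)
  · exact congrArg Subtype.val (hug _)

theorem CoerciveOn.norm_le_inv {f B : E →L[ℝ] E} {c : ℝ} (hc : 0 < c) (hf : CoerciveOn f K c)
    (hAB : compression K f * B = K.starProjection) (hPB : K.starProjection * B = B) :
    ‖B‖ ≤ c⁻¹ := by
  refine opNorm_le_bound _ (inv_nonneg.mpr hc.le) fun y => ?_
  have hz : K.starProjection (B y) = B y := by rw [← mul_apply_eq_comp, hPB]
  have hinner : c * ‖B y‖ ^ 2 ≤ ⟪y, B y⟫ := by
    calc c * ‖B y‖ ^ 2 ≤ ⟪f (B y), B y⟫ := hf _ (Submodule.starProjection_eq_self_iff.mp hz)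
      _ = ⟪K.starProjection y, B y⟫ := by
        rw [← hAB, mul_apply_eq_comp, inner_compression_apply, hz]
      _ = ⟪y, B y⟫ := by rw [Submodule.inner_starProjection_left_eq_right, hz]
  have h := hinner.trans (real_inner_le_norm y (B y))
  rw [inv_mul_eq_div, le_div_iff₀ hc]
  rcases (norm_nonneg (B y)).eq_or_lt with h₀ | h₀
  · rw [← h₀]; simp [norm_nonneg]
  · nlinarith

theorem CoerciveOn.mul_eq_and_norm_le_of_isPenroseInverse [CompleteSpace E] [CompleteSpace K] {f B : E →L[ℝ] E} {c : ℝ}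
    (hc : 0 < c) (hf : CoerciveOn f K c) (hB : IsPenroseInverse (compression K f) B) :
    compression K f * B = K.starProjection ∧ B * compression K f = K.starProjection ∧
      K.starProjection * B = B ∧ B * K.starProjection = B ∧ ‖B‖ ≤ c⁻¹ := by
  obtain ⟨S, hAS, hSA⟩ := hf.exists_compression_mul_eq hc
  have hP := K.isIdempotentElem_starProjection
  obtain ⟨hAB, hBA, hPB, hBP⟩ := hB.mul_eq (isSelfAdjoint_starProjection K)
    (by rw [compression, ← mul_assoc, ← mul_assoc, hP.eq]) (by rw [compression, mul_assoc, hP.eq])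
    hAS hSA
  exact ⟨hAB, hBA, hPB, hBP, hf.norm_le_inv hc hAB hPB⟩

theorem CoerciveOn.norm_sub_le_of_isPenroseInverse [CompleteSpace E] {K' : Submodule ℝ E} [CompleteSpace K]
    [CompleteSpace K'] {f g B B' : E →L[ℝ] E} {c : ℝ} (hc : 0 < c) (hf : CoerciveOn f K c)
    (hB : IsPenroseInverse (compression K f) B) (hB' : IsPenroseInverse (compression K' g) B')
    (hm : max ‖g - f‖ ‖K'.starProjection - K.starProjection‖ ≤
      min (1 / 4) (c / (4 * (1 + 2 * ‖f‖)))) :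
    ‖B' - B‖ ≤ (4 * (1 + 2 * ‖f‖) / c ^ 2 + 5 / c) *
      max ‖g - f‖ ‖K'.starProjection - K.starProjection‖ := by
  set m := max ‖g - f‖ ‖K'.starProjection - K.starProjection‖
  set M := 1 + 2 * ‖f‖
  have hA : ‖compression K' g - compression K f‖ ≤ M * m :=
    norm_mul_mul_sub_mul_mul_le K.starProjection_norm_le K'.starProjection_norm_le
  have hAc : M * m ≤ c / 4 := by
    have h := hm.trans (min_le_right _ _)
    rw [le_div_iff₀ (by positivity)] at h
    linarith
  have hP : ‖K'.starProjection - K.starProjection‖ ≤ m := le_max_right _ _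
  have hf' := hf.of_norm_compression_sub_le hc.le (hA.trans hAc)
    (hP.trans (hm.trans (min_le_left _ _)))
  obtain ⟨hAB, -, hPB, -, hBc⟩ := hf.mul_eq_and_norm_le_of_isPenroseInverse hc hB
  obtain ⟨-, hBA', -, hBP', hB'c⟩ := hf'.mul_eq_and_norm_le_of_isPenroseInverse (by positivity) hB'
  have hP₁ : ‖1 - K.starProjection‖ ≤ 1 := by
    rw [← K.starProjection_orthogonal']
    exact Kᗮ.starProjection_norm_le
  calc ‖B' - B‖ ≤ ‖B'‖ * ‖compression K f - compression K' g‖ * ‖B‖ +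
        ‖K'.starProjection - K.starProjection‖ * ‖B‖ +
        ‖B'‖ * ‖K'.starProjection - K.starProjection‖ :=
      norm_sub_le_of_mul_eq hAB hBA' hPB hBP' K.isIdempotentElem_starProjection hP₁
    _ ≤ (c / 4)⁻¹ * (M * m) * c⁻¹ + m * c⁻¹ + (c / 4)⁻¹ * m := by
      rw [norm_sub_rev (compression K f)]
      gcongr
    _ = (4 * M / c ^ 2 + 5 / c) * m := by
      field_simp
      ring

end InnerProduct

theorem projCLM_comp_comp_projCLM {p : ℕ} (K : Submodule ℝ (EuclideanSpace ℝ (Fin p)))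
    (f : EuclideanSpace ℝ (Fin p) →L[ℝ] EuclideanSpace ℝ (Fin p)) :
    projCLM K ∘L f ∘L projCLM K = compression K f :=
  rfl

theorem isMoorePenroseInverse_iff {p : ℕ}
    {A B : EuclideanSpace ℝ (Fin p) →L[ℝ] EuclideanSpace ℝ (Fin p)} :
    IsMoorePenroseInverse A B ↔ IsPenroseInverse A B := by
  simp only [IsMoorePenroseInverse, IsPenroseInverse, ← mul_def, mul_assoc]

theorem pseudo_inverse_convergence_general {p : ℕ}
    (Γ : ℕ → EuclideanSpace ℝ (Fin p) →L[ℝ] EuclideanSpace ℝ (Fin p))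
    (Γt : EuclideanSpace ℝ (Fin p) →L[ℝ] EuclideanSpace ℝ (Fin p))
    (hΓsym : IsSelfAdjoint Γt) (hΓpsd : ∀ v, 0 ≤ (inner ℝ (Γt v) v : ℝ))
    (hΓ : Tendsto Γ atTop (𝓝 Γt))
    (Tk : ℕ → Submodule ℝ (EuclideanSpace ℝ (Fin p)))
    (T : Submodule ℝ (EuclideanSpace ℝ (Fin p)))
    (hT : Tendsto (fun k => projCLM (Tk k)) atTop (𝓝 (projCLM T)))
    (hker : LinearMap.ker (Γt : EuclideanSpace ℝ (Fin p) →ₗ[ℝ] EuclideanSpace ℝ (Fin p)) ⊓ T = ⊥)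
    (B : ℕ → EuclideanSpace ℝ (Fin p) →L[ℝ] EuclideanSpace ℝ (Fin p))
    (Bt : EuclideanSpace ℝ (Fin p) →L[ℝ] EuclideanSpace ℝ (Fin p))
    (hB : ∀ k, IsMoorePenroseInverse (projCLM (Tk k) ∘L Γ k ∘L projCLM (Tk k)) (B k))
    (hBt : IsMoorePenroseInverse (projCLM T ∘L Γt ∘L projCLM T) Bt) :
    Tendsto B atTop (𝓝 Bt) ∧
    ∃ C > (0:ℝ), ∃ K, ∀ k ≥ K,
      ‖B k - Bt‖ ≤ C * max ‖Γ k - Γt‖ ‖projCLM (Tk k) - projCLM T‖ := by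
  simp only [projCLM_comp_comp_projCLM, isMoorePenroseInverse_iff] at hB hBt
  obtain ⟨c, hc, hcoer⟩ := (isPositive_def'.mpr ⟨hΓsym, hΓpsd⟩).exists_coerciveOn hker
  set m := fun k => max ‖Γ k - Γt‖ ‖projCLM (Tk k) - projCLM T‖
  have hm : Tendsto m atTop (𝓝 0) := by
    simpa using (tendsto_iff_norm_sub_tendsto_zero.mp hΓ).max
      (tendsto_iff_norm_sub_tendsto_zero.mp hT)
  set C := 4 * (1 + 2 * ‖Γt‖) / c ^ 2 + 5 / c
  have hbound : ∀ᶠ k in atTop, ‖B k - Bt‖ ≤ C * m k := by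
    filter_upwards [hm.eventually (eventually_le_nhds (by positivity :
      0 < min (1 / 4) (c / (4 * (1 + 2 * ‖Γt‖)))))] with k hk
    exact hcoer.norm_sub_le_of_isPenroseInverse hc hBt (hB k) hk
  obtain ⟨K, hK⟩ := eventually_atTop.mp hbound
  refine ⟨?_, C, by positivity, K, hK⟩
  rw [tendsto_iff_norm_sub_tendsto_zero]
  refine squeeze_zero' (Eventually.of_forall fun k => norm_nonneg _) hbound ?_
  simpa using hm.const_mul C

/-- Convergence of pseudo-inverses of restricted covariances, with the Lipschitz-type
bound (18) of the paper. -/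
theorem pseudo_inverse_convergence {p : ℕ}
    (Γ : ℕ → EuclideanSpace ℝ (Fin p) →L[ℝ] EuclideanSpace ℝ (Fin p))
    (Γt : EuclideanSpace ℝ (Fin p) →L[ℝ] EuclideanSpace ℝ (Fin p))
    (hΓksym : ∀ k, IsSelfAdjoint (Γ k)) (hΓkpsd : ∀ k v, 0 ≤ (inner ℝ (Γ k v) v : ℝ))
    (hΓsym : IsSelfAdjoint Γt) (hΓpsd : ∀ v, 0 ≤ (inner ℝ (Γt v) v : ℝ))
    (hΓ : Tendsto Γ atTop (𝓝 Γt))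
    (Tk : ℕ → Submodule ℝ (EuclideanSpace ℝ (Fin p)))
    (T : Submodule ℝ (EuclideanSpace ℝ (Fin p)))
    (hT : Tendsto (fun k => projCLM (Tk k)) atTop (𝓝 (projCLM T)))
    (hker : LinearMap.ker (Γt : EuclideanSpace ℝ (Fin p) →ₗ[ℝ] EuclideanSpace ℝ (Fin p)) ⊓ T = ⊥)
    (B : ℕ → EuclideanSpace ℝ (Fin p) →L[ℝ] EuclideanSpace ℝ (Fin p))
    (Bt : EuclideanSpace ℝ (Fin p) →L[ℝ] EuclideanSpace ℝ (Fin p))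
    (hB : ∀ k, IsMoorePenroseInverse (projCLM (Tk k) ∘L Γ k ∘L projCLM (Tk k)) (B k))
    (hBt : IsMoorePenroseInverse (projCLM T ∘L Γt ∘L projCLM T) Bt) :
    Tendsto B atTop (𝓝 Bt) ∧
    ∃ C > (0:ℝ), ∃ K, ∀ k ≥ K,
      ‖B k - Bt‖ ≤ C * max ‖Γ k - Γt‖ ‖projCLM (Tk k) - projCLM T‖ :=
  pseudo_inverse_convergence_general Γ Γt hΓsym hΓpsd hΓ Tk T hT hker B Bt hB hBt
end
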